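/- If A is a 2×2 real symmetric matrix with entries in (1/n)ℤ for a positive integer n, then the function Δ¹⌈q_A⌉ on ℤ² is 2n-periodic, i.e., Δ¹⌈q_A⌉(x + y) = Δ¹⌈q_A⌉(x) for all x ∈ ℤ² and y ∈ 2nℤ². -/
import Mathlib


open Matrix

/-- Discrete Laplacian on `ℤ²` with the 4-neighbor structure. -/
def lap (f : ℤ × ℤ → ℤ) (x : ℤ × ℤ) : ℤ :=
  (f (x.1 + 1, x.2) - f x) + (f (x.1 - 1, x.2) - f x) +
    (f (x.1, x.2 + 1) - f x) + (f (x.1, x.2 - 1) - f x)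

/-- The quadratic form `(1/2)xᵀAx` evaluated at lattice points. -/
noncomputable def qf (A : Matrix (Fin 2) (Fin 2) ℝ) (x : ℤ × ℤ) : ℝ :=
  (1/2 : ℝ) * (![(x.1 : ℝ), (x.2 : ℝ)] ⬝ᵥ A.mulVec ![(x.1 : ℝ), (x.2 : ℝ)])

theorem stmt_6 (n : ℕ) (hn : 0 < n) (A : Matrix (Fin 2) (Fin 2) ℝ)
    (hA : A.IsSymm) (hent : ∀ i j, ∃ m : ℤ, A i j = (m : ℝ) / n) :
    ∀ x y : ℤ × ℤ, (∃ k l : ℤ, y = (2 * n * k, 2 * n * l)) →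
      lap (fun z => ⌈qf A z⌉) (x + y) = lap (fun z => ⌈qf A z⌉) x := by
  rintro ⟨a, b⟩ y ⟨k, l, rfl⟩
  obtain ⟨m00, h00⟩ := hent 0 0
  obtain ⟨m01, h01⟩ := hent 0 1
  obtain ⟨m11, h11⟩ := hent 1 1
  have h10 : A 1 0 = (m01 : ℝ) / n := by
    rw [← h01]; exact hA.apply 0 1
  have hn' : (n : ℝ) ≠ 0 := Nat.cast_ne_zero.2 hn.ne'
  have hq : ∀ a b : ℤ, qf A (a, b) =
      ((m00 : ℝ) * a * a + 2 * m01 * a * b + m11 * b * b) / (2 * n) := by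
    intro a b
    simp only [qf, Matrix.mulVec, dotProduct, Fin.sum_univ_two,
      Matrix.cons_val_zero, Matrix.cons_val_one, Matrix.head_cons, h00, h01, h10, h11]
    field_simp
    ring
  have key : ∀ a' b' a b : ℤ, a' = a + 2 * (n : ℤ) * k → b' = b + 2 * (n : ℤ) * l →
      ⌈qf A (a', b')⌉ = ⌈qf A (a, b)⌉ +
        (2 * k * m00 * a + 2 * (n : ℤ) * m00 * k ^ 2 + 2 * l * m01 * a + 2 * k * m01 * b
          + 4 * (n : ℤ) * m01 * k * l + 2 * l * m11 * b + 2 * (n : ℤ) * m11 * l ^ 2) := by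
    rintro a' b' a b rfl rfl
    rw [← Int.ceil_add_intCast]
    congr 1
    rw [hq, hq]
    push_cast
    field_simp
    ring
  have key2 : ∀ a b : ℤ, ⌈qf A (a + 2 * (n : ℤ) * k, b + 2 * (n : ℤ) * l)⌉ =
      ⌈qf A (a, b)⌉ +
        (2 * k * m00 * a + 2 * (n : ℤ) * m00 * k ^ 2 + 2 * l * m01 * a + 2 * k * m01 * b
          + 4 * (n : ℤ) * m01 * k * l + 2 * l * m11 * b + 2 * (n : ℤ) * m11 * l ^ 2) := by
    intro a b; exact key _ _ a b rfl rfl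
  simp only [lap, Prod.mk_add_mk, Prod.fst, Prod.snd]
  rw [show (a + 2*(n:ℤ)*k + 1) = (a+1) + 2*(n:ℤ)*k by ring,
    show (a + 2*(n:ℤ)*k - 1) = (a-1) + 2*(n:ℤ)*k by ring,
    show (b + 2*(n:ℤ)*l + 1) = (b+1) + 2*(n:ℤ)*l by ring,
    show (b + 2*(n:ℤ)*l - 1) = (b-1) + 2*(n:ℤ)*l by ring,
    key2 (a+1) b, key2 (a-1) b, key2 a (b+1), key2 a (b-1), key2 a b]
  ring
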